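/- The normal part of the third-order conformal circle equation is invariant under orientation-preserving reparametrization: if γ̃(σ) = γ(τ(σ)) with τ' > 0, then the component of ∇_{γ̃'}∇_{γ̃'}γ̃' + (terms of equation (1)) orthogonal to γ̃' vanishes if and only if the corresponding orthogonal component vanishes for γ. -/

import Mathlib

open scoped RealInnerProductSpace

/-- Projection of `w` onto the orthogonal complement of the velocity of `c` at time `t`. -/
noncomputable def perpPart {n : ℕ} (c : ℝ → EuclideanSpace ℝ (Fin n)) (t : ℝ)
    (w : EuclideanSpace ℝ (Fin n)) : EuclideanSpace ℝ (Fin n) :=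
  w - (⟪w, deriv c t⟫ / ⟪deriv c t, deriv c t⟫) • deriv c t

/-- The normal part of the conformal circle equation (flat space, `P = 0`) for `c` at `t`. -/
noncomputable def NormalCCEq {n : ℕ} (c : ℝ → EuclideanSpace ℝ (Fin n)) (t : ℝ) : Prop :=
  perpPart c t (iteratedDeriv 3 c t)
    = (3 * ⟪deriv c t, iteratedDeriv 2 c t⟫ / ⟪deriv c t, deriv c t⟫)
        • perpPart c t (iteratedDeriv 2 c t)

/-!
Under `γ̃ = γ ∘ τ` the chain rule gives `γ̃' = τ' γ'`, `γ̃'' = τ'' γ' + τ'² γ''` and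
`γ̃''' = τ''' γ' + 3 τ' τ'' γ'' + τ'³ γ'''`. Projecting orthogonally to the line `ℝ γ̃' = ℝ γ'`
kills the `γ'` terms, and the coefficient transforms as
`3⟪γ̃', γ̃''⟫ / ⟪γ̃', γ̃'⟫ = 3 τ'' / τ' + τ' · 3⟪γ', γ''⟫ / ⟪γ', γ'⟫`: its first summand absorbs the
normal part of `3 τ' τ'' γ''`, so the equation for `γ̃` is `τ'³` times the equation for `γ`.
-/

section Reparametrization

variable {E : Type*} [NormedAddCommGroup E] [NormedSpace ℝ E] {f : ℝ → E} {τ : ℝ → ℝ}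

theorem HasDerivAt.smul_comp {a : ℝ → ℝ} {g : ℝ → E} {a' τ' s : ℝ} {g' : E}
    (ha : HasDerivAt a a' s) (hg : HasDerivAt g g' (τ s)) (hτ : HasDerivAt τ τ' s) :
    HasDerivAt (fun x => a x • g (τ x)) (a' • g (τ s) + (a s * τ') • g') s :=
  (ha.smul (hg.scomp s hτ)).congr_deriv (by rw [mul_smul, add_comm]; rfl)

theorem deriv_comp_eq_smul (hf : Differentiable ℝ f) (hτ : Differentiable ℝ τ) :
    deriv (f ∘ τ) = fun s => deriv τ s • deriv f (τ s) :=
  funext fun s => deriv.scomp s (hf _) (hτ s)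

theorem iteratedDeriv_two_comp (hf : ContDiff ℝ 2 f) (hτ : ContDiff ℝ 2 τ) :
    iteratedDeriv 2 (f ∘ τ) = fun s =>
      iteratedDeriv 2 τ s • deriv f (τ s) + deriv τ s ^ 2 • iteratedDeriv 2 f (τ s) := by
  have hf0 := hf.differentiable_iteratedDeriv 0 (by norm_num)
  have hf1 := hf.differentiable_iteratedDeriv 1 (by norm_num)
  have hτ0 := hτ.differentiable_iteratedDeriv 0 (by norm_num)
  have hτ1 := hτ.differentiable_iteratedDeriv 1 (by norm_num)
  simp only [iteratedDeriv_zero, iteratedDeriv_one] at hf0 hf1 hτ0 hτ1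
  funext s
  have hderiv := (hτ1 s).hasDerivAt.smul_comp (hf1 (τ s)).hasDerivAt (hτ0 s).hasDerivAt
  rw [iteratedDeriv_succ, iteratedDeriv_one, deriv_comp_eq_smul hf0 hτ0]
  refine hderiv.deriv.trans ?_
  simp only [iteratedDeriv_succ, iteratedDeriv_zero]
  module

theorem iteratedDeriv_three_comp (hf : ContDiff ℝ 3 f) (hτ : ContDiff ℝ 3 τ) :
    iteratedDeriv 3 (f ∘ τ) = fun s =>
      iteratedDeriv 3 τ s • deriv f (τ s)
        + (3 * deriv τ s * iteratedDeriv 2 τ s) • iteratedDeriv 2 f (τ s)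
        + deriv τ s ^ 3 • iteratedDeriv 3 f (τ s) := by
  have hf1 := hf.differentiable_iteratedDeriv 1 (by norm_num)
  have hf2 := hf.differentiable_iteratedDeriv 2 (by norm_num)
  have hτ0 := hτ.differentiable_iteratedDeriv 0 (by norm_num)
  have hτ1 := hτ.differentiable_iteratedDeriv 1 (by norm_num)
  have hτ2 := hτ.differentiable_iteratedDeriv 2 (by norm_num)
  simp only [iteratedDeriv_zero, iteratedDeriv_one] at hf1 hτ0 hτ1
  funext s
  have hderiv := ((hτ2 s).hasDerivAt.smul_comp (hf1 (τ s)).hasDerivAt (hτ0 s).hasDerivAt).add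
    (((hτ1 s).hasDerivAt.pow 2).smul_comp (hf2 (τ s)).hasDerivAt (hτ0 s).hasDerivAt)
  rw [iteratedDeriv_succ, iteratedDeriv_two_comp (hf.of_le (by norm_num))
    (hτ.of_le (by norm_num))]
  refine hderiv.deriv.trans ?_
  simp only [iteratedDeriv_succ, iteratedDeriv_zero, Pi.pow_apply]
  module

end Reparametrization

section Jet

variable {E : Type*} [NormedAddCommGroup E] [InnerProductSpace ℝ E]

def NormalCCEqJet (v₁ v₂ v₃ : E) : Prop :=
  (ℝ ∙ v₁)ᗮ.starProjection v₃ = (3 * ⟪v₁, v₂⟫ / ⟪v₁, v₁⟫) • (ℝ ∙ v₁)ᗮ.starProjection v₂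

theorem starProjection_orthogonal_span_singleton_smul {u : ℝ} (hu : u ≠ 0) (v : E) :
    (ℝ ∙ u • v)ᗮ.starProjection = (ℝ ∙ v)ᗮ.starProjection := by
  congr 2
  exact Submodule.span_singleton_smul_eq hu.isUnit v

theorem normalCCEqJet_reparam {u a b : ℝ} {v w₂ w₃ : E} (hu : u ≠ 0) (hv : v ≠ 0) :
    NormalCCEqJet (u • v) (a • v + u ^ 2 • w₂) (b • v + (3 * u * a) • w₂ + u ^ 3 • w₃) ↔
      NormalCCEqJet v w₂ w₃ := by
  have hvv : ⟪v, v⟫ ≠ 0 := inner_self_ne_zero.mpr hv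
  have hcoeff : 3 * ⟪u • v, a • v + u ^ 2 • w₂⟫ / ⟪u • v, u • v⟫ * u ^ 2
      = 3 * u * a + u ^ 3 * (3 * ⟪v, w₂⟫ / ⟪v, v⟫) := by
    simp only [inner_add_right, real_inner_smul_left, real_inner_smul_right]
    field_simp
  unfold NormalCCEqJet
  rw [starProjection_orthogonal_span_singleton_smul hu]
  simp only [map_add, map_smul, Submodule.starProjection_orthogonalComplement_singleton_eq_zero,
    smul_zero, zero_add, smul_smul, hcoeff, add_smul]
  rw [add_right_inj, mul_smul]
  exact (smul_right_injective E (pow_ne_zero 3 hu)).eq_iff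

end Jet

theorem perpPart_eq_starProjection {n : ℕ} (c : ℝ → EuclideanSpace ℝ (Fin n)) (t : ℝ)
    (w : EuclideanSpace ℝ (Fin n)) :
    perpPart c t w = (ℝ ∙ deriv c t)ᗮ.starProjection w := by
  rw [perpPart, Submodule.starProjection_orthogonal_val, Submodule.starProjection_singleton,
    real_inner_comm, real_inner_self_eq_norm_sq]
  rfl

theorem normalCCEq_iff_jet {n : ℕ} (c : ℝ → EuclideanSpace ℝ (Fin n)) (t : ℝ) :
    NormalCCEq c t ↔ NormalCCEqJet (deriv c t) (iteratedDeriv 2 c t) (iteratedDeriv 3 c t) := by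
  simp only [NormalCCEq, NormalCCEqJet, perpPart_eq_starProjection]

theorem stmt9 (n : ℕ)
    (γ : ℝ → EuclideanSpace ℝ (Fin n)) (hγ : ContDiff ℝ (⊤ : ℕ∞) γ)
    (hreg : ∀ t, deriv γ t ≠ 0)
    (τ : ℝ → ℝ) (hτ : ContDiff ℝ (⊤ : ℕ∞) τ) (hτ' : ∀ s, 0 < deriv τ s) :
    ∀ s : ℝ, NormalCCEq (γ ∘ τ) s ↔ NormalCCEq γ (τ s) := by
  intro s
  have hγ3 : ContDiff ℝ 3 γ := hγ.of_le (WithTop.coe_le_coe.mpr le_top)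
  have hτ3 : ContDiff ℝ 3 τ := hτ.of_le (WithTop.coe_le_coe.mpr le_top)
  rw [normalCCEq_iff_jet, normalCCEq_iff_jet,
    deriv_comp_eq_smul (hγ3.differentiable (by norm_num)) (hτ3.differentiable (by norm_num)),
    iteratedDeriv_two_comp (hγ3.of_le (by norm_num)) (hτ3.of_le (by norm_num)),
    iteratedDeriv_three_comp hγ3 hτ3]
  exact normalCCEqJet_reparam (hτ' s).ne' (hreg (τ s))
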